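/- The function h is differentiable in t and in ρ at every point of H, with ∂h/∂t (t,ρ,x) = 1 / B_s(h(t,ρ,x),ρ,x) > 0 and ∂h/∂ρ_p (t,ρ,x) = − B_{ρ_p}(h(t,ρ,x),ρ,x) / B_s(h(t,ρ,x),ρ,x) for each p ∈ {1,…,m}, and these partial derivatives are continuous on H. -/

import Mathlib

open MeasureTheory Real Filter Set

noncomputable section

/-- The unit simplex Δ in ℝ^m. -/
def simplex (m : ℕ) : Set (Fin m → ℝ) :=
  {l | (∀ i, 0 ≤ l i) ∧ ∑ i, l i ≤ 1}

/-- ⟨λ̂, log λ̂⟩ = Σ_{i=0}^m λ_i log λ_i, with λ_0 = 1 - Σ λ_i.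
Note `Real.log 0 = 0`, so the convention 0·log 0 = 0 holds. -/
def ent (m : ℕ) (l : Fin m → ℝ) : ℝ :=
  (1 - ∑ i, l i) * Real.log (1 - ∑ i, l i) + ∑ i, l i * Real.log (l i)

/-- b(λ,ρ) = log(1+|e^ρ|) + Σ_{i=0}^m (λ_i log λ_i − ρ_i λ_i), where ρ_0 = 0. -/
def bfun (m : ℕ) (l ρ : Fin m → ℝ) : ℝ :=
  Real.log (1 + ∑ i, Real.exp (ρ i)) + ent m l - ∑ i, ρ i * l i

/-- μ(ρ) : μ_i(ρ) = e^{ρ_i}/(1+|e^ρ|) for i = 1,…,m. -/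
def mu (m : ℕ) (ρ : Fin m → ℝ) : Fin m → ℝ :=
  fun i => Real.exp (ρ i) / (1 + ∑ j, Real.exp (ρ j))

/-- B(s,ρ,x) = b((1−s)μ(ρ) + s x, ρ). -/
def Bfun (m : ℕ) (s : ℝ) (ρ x : Fin m → ℝ) : ℝ :=
  bfun m (fun i => (1 - s) * mu m ρ i + s * x i) ρ

/-- D(t,ρ) = m!·vol({λ ∈ Δ : b(λ,ρ) ≤ t}). -/
def Dfun (m : ℕ) (t : ℝ) (ρ : Fin m → ℝ) : ℝ :=
  (m.factorial : ℝ) * (volume {l ∈ simplex m | bfun m l ρ ≤ t}).toReal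

/-- F_n(ρ) = ∫_{Δ^n} max_j [⟨ρ,λ^j⟩ − ⟨λ̂^j, log λ̂^j⟩] dλ^1⋯dλ^n, each dλ^j = m!·Lebesgue. -/
def Fn (m n : ℕ) (ρ : Fin m → ℝ) : ℝ :=
  ((m.factorial : ℝ)) ^ n *
    ∫ L in {L : Fin n → Fin m → ℝ | ∀ j, L j ∈ simplex m},
      ⨆ j, (∑ i, ρ i * L j i - ent m (L j))

/-- Partial derivative in the variable ρ_p. -/
def pderivR (m : ℕ) (p : Fin m) (f : (Fin m → ℝ) → ℝ) (ρ : Fin m → ℝ) : ℝ :=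
  deriv (fun r => f (Function.update ρ p r)) (ρ p)

/-- H = {(t,ρ,x) ∈ (0,∞) × ℝ^m × ∂Δ : t < b(x,ρ)}. -/
def Hset (m : ℕ) : Set (ℝ × (Fin m → ℝ) × (Fin m → ℝ)) :=
  {q | q.2.2 ∈ frontier (simplex m) ∧ 0 < q.1 ∧ q.1 < bfun m q.2.2 q.2.1}

/-!
Along the segment `λ(s) = (1 - s) μ(ρ) + s x`, the derivative `B_s` satisfies
`s B_s = ∑_{i=0}^m (log λ_i - log μ_i) (λ_i - μ_i)`, which is positive for `0 < s < 1` because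
`log` is increasing and `x ≠ μ(ρ)` (the point `μ(ρ)` is interior, `x` is on the boundary).
Hence `B(·, ρ, x)` is strictly increasing on `(0, 1)`, which makes its inverse `h` continuous
on `H`. As `B` is smooth wherever `λ` lies in the open simplex, the inverse function theorem in
`t` and the implicit function theorem in `ρ_p` give the derivatives of `h`, and the resulting
formulas are continuous because `h` and the first derivatives of `B` are.
-/

open Topology

theorem continuousWithinAt_of_strictMonoOn_of_apply_eq {X : Type*} [TopologicalSpace X]
    {S : Set X} {p₀ : X} {I : Set ℝ} {B : ℝ → X → ℝ} {T g : X → ℝ} (hI : I ∈ 𝓝 (g p₀))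
    (hmono : ∀ p ∈ S, StrictMonoOn (B · p) I) (hB : ∀ s ∈ I, ContinuousWithinAt (B s) S p₀)
    (hT : ContinuousWithinAt T S p₀) (hg : ∀ p ∈ S, g p ∈ I ∧ B (g p) p = T p) (hp₀ : p₀ ∈ S) :
    ContinuousWithinAt g S p₀ := by
  obtain ⟨hg₀I, hg₀⟩ := hg p₀ hp₀
  refine tendsto_order.2 ⟨fun a ha => ?_, fun a ha => ?_⟩
  · obtain ⟨l, hl, hlI⟩ := exists_Ioc_subset_of_mem_nhds hI ⟨a, ha⟩
    obtain ⟨s, hs, hs'⟩ := exists_between (max_lt ha hl)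
    have hsI : s ∈ I := hlI ⟨(le_max_right a l).trans_lt hs, hs'.le⟩
    have hlt : B s p₀ < T p₀ := hg₀ ▸ hmono p₀ hp₀ hsI hg₀I hs'
    filter_upwards [(hB s hsI).eventually_lt hT hlt, self_mem_nhdsWithin] with p hp hpS
    obtain ⟨hgI, hgp⟩ := hg p hpS
    exact (le_max_left a l).trans_lt
      (hs.trans (((hmono p hpS).lt_iff_lt hsI hgI).1 (hgp ▸ hp)))
  · obtain ⟨u, hu, huI⟩ := exists_Ico_subset_of_mem_nhds hI ⟨a, ha⟩
    obtain ⟨s, hs, hs'⟩ := exists_between (lt_min ha hu)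
    have hsI : s ∈ I := huI ⟨hs.le, hs'.trans_le (min_le_right a u)⟩
    have hlt : T p₀ < B s p₀ := hg₀ ▸ hmono p₀ hp₀ hg₀I hsI hs
    filter_upwards [hT.eventually_lt (hB s hsI) hlt, self_mem_nhdsWithin] with p hp hpS
    obtain ⟨hgI, hgp⟩ := hg p hpS
    exact (((hmono p hpS).lt_iff_lt hgI hsI).1 (hgp ▸ hp)).trans
      (hs'.trans_le (min_le_left a u))

theorem HasFDerivAt.hasDerivAt_fst_slice {F : ℝ × ℝ → ℝ} {L : ℝ × ℝ →L[ℝ] ℝ} {a b : ℝ}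
    (hF : HasFDerivAt F L (a, b)) : HasDerivAt (fun r => F (r, b)) (L (1, 0)) a :=
  hF.comp_hasDerivAt a ((hasDerivAt_id a).prodMk (hasDerivAt_const a b))

theorem HasFDerivAt.hasDerivAt_snd_slice {F : ℝ × ℝ → ℝ} {L : ℝ × ℝ →L[ℝ] ℝ} {a b : ℝ}
    (hF : HasFDerivAt F L (a, b)) : HasDerivAt (fun s => F (a, s)) (L (0, 1)) b :=
  hF.comp_hasDerivAt b ((hasDerivAt_const b a).prodMk (hasDerivAt_id b))

theorem HasStrictFDerivAt.hasDerivAt_implicit {F : ℝ × ℝ → ℝ} {L : ℝ × ℝ →L[ℝ] ℝ}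
    {u : ℝ × ℝ} (hF : HasStrictFDerivAt F L u) (hL : L (0, 1) ≠ 0) {g : ℝ → ℝ}
    (hg : ContinuousAt g u.1) (hgu : g u.1 = u.2) (hFg : ∀ᶠ r in 𝓝 u.1, F (r, g r) = F u) :
    HasDerivAt g (-L (1, 0) / L (0, 1)) u.1 := by
  have hinv : (L ∘L .inr ℝ ℝ ℝ).IsInvertible := by
    refine ⟨ContinuousLinearEquiv.unitsEquivAut ℝ (Units.mk0 _ hL), ?_⟩
    ext
    simp
  have hgψ : g =ᶠ[𝓝 u.1] hF.implicitFunctionOfProdDomain hinv := by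
    have hcurve : Tendsto (fun r => (r, g r)) (𝓝 u.1) (𝓝 u) := by
      simpa [hgu] using (continuousAt_id.prodMk hg).tendsto
    filter_upwards [hFg, hcurve.eventually
      (hF.eventually_apply_eq_iff_implicitFunctionOfProdDomain hinv)] with r hr hiff
    exact (hiff.1 hr).symm
  have hψ := (hF.hasStrictFDerivAt_implicitFunctionOfProdDomain hinv).hasStrictDerivAt
  refine (hψ.hasDerivAt.congr_of_eventuallyEq hgψ).congr_deriv ?_
  have : (L ∘L .inr ℝ ℝ ℝ).inverse (L (1, 0)) = L (1, 0) / L (0, 1) := by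
    have hsmul : ((0 : ℝ), L (1, 0) / L (0, 1)) = (L (1, 0) / L (0, 1)) • ((0, 1) : ℝ × ℝ) := by
      simp
    rw [hinv.inverse_apply_eq, ContinuousLinearMap.comp_apply, ContinuousLinearMap.inr_apply,
      hsmul, map_smul, smul_eq_mul, div_mul_cancel₀ _ hL]
  simp [this, neg_div]

lemma isClosed_simplex (m : ℕ) : IsClosed (simplex m) := by
  simp only [simplex, Set.ofPred_and, Set.ofPred_forall]
  exact (isClosed_iInter fun i => isClosed_le continuous_const (continuous_apply i)).inter
    (isClosed_le (by fun_prop) continuous_const)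

lemma mem_simplex_of_mem_frontier {m : ℕ} {x : Fin m → ℝ} (hx : x ∈ frontier (simplex m)) :
    x ∈ simplex m :=
  (isClosed_simplex m).frontier_subset hx

section mu

variable {m : ℕ} (ρ : Fin m → ℝ)

lemma mu_pos (i : Fin m) : 0 < mu m ρ i := by
  unfold mu; positivity

lemma one_sub_sum_mu : 1 - ∑ i, mu m ρ i = (1 + ∑ i, exp (ρ i))⁻¹ := by
  have : 0 < 1 + ∑ i, exp (ρ i) := by positivity
  simp only [mu, ← Finset.sum_div]
  field_simp
  ring

lemma log_mu (i : Fin m) : log (mu m ρ i) = ρ i - log (1 + ∑ j, exp (ρ j)) := by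
  rw [mu, log_div (exp_ne_zero _) (by positivity), log_exp]

lemma log_one_sub_sum_mu : log (1 - ∑ i, mu m ρ i) = -log (1 + ∑ i, exp (ρ i)) := by
  rw [one_sub_sum_mu, log_inv]

lemma mu_mem_interior_simplex : mu m ρ ∈ interior (simplex m) := by
  have hopen : IsOpen {l : Fin m → ℝ | (∀ i, 0 < l i) ∧ ∑ i, l i < 1} := by
    simp only [Set.ofPred_and, Set.ofPred_forall]
    exact (isOpen_iInter_of_finite fun i => isOpen_lt continuous_const (continuous_apply i)).inter
      (isOpen_lt (by fun_prop) continuous_const)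
  refine interior_maximal (fun l hl => And.intro (fun i => (hl.1 i).le) hl.2.le) hopen
    (show mu m ρ ∈ {l : Fin m → ℝ | (∀ i, 0 < l i) ∧ ∑ i, l i < 1} from ⟨mu_pos ρ, ?_⟩)
  have := one_sub_sum_mu ρ
  have : 0 < (1 + ∑ i, exp (ρ i))⁻¹ := by positivity
  linarith

lemma ne_mu_of_mem_frontier {x : Fin m → ℝ} (hx : x ∈ frontier (simplex m)) : x ≠ mu m ρ := by
  rintro rfl
  exact hx.2 (mu_mem_interior_simplex ρ)

end mu

def lam (m : ℕ) (s : ℝ) (ρ x : Fin m → ℝ) : Fin m → ℝ :=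
  fun i => (1 - s) * mu m ρ i + s * x i

section lam

variable {m : ℕ} {s : ℝ} {ρ x : Fin m → ℝ}

lemma lam_pos (hx : x ∈ simplex m) (hs₀ : 0 ≤ s) (hs₁ : s < 1) (i : Fin m) :
    0 < lam m s ρ x i := by
  have := mul_pos (sub_pos.2 hs₁) (mu_pos ρ i)
  have := mul_nonneg hs₀ (hx.1 i)
  simp only [lam]; linarith

lemma one_sub_sum_lam_pos (hx : x ∈ simplex m) (hs₀ : 0 ≤ s) (hs₁ : s < 1) :
    0 < 1 - ∑ i, lam m s ρ x i := by
  have hsum : ∑ i, lam m s ρ x i = (1 - s) * ∑ i, mu m ρ i + s * ∑ i, x i := by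
    simp only [lam, Finset.sum_add_distrib, Finset.mul_sum]
  have := one_sub_sum_mu ρ
  have : 0 < (1 + ∑ i, exp (ρ i))⁻¹ := by positivity
  have := hx.2
  rw [hsum]; nlinarith

lemma lam_sub_mu (i : Fin m) : lam m s ρ x i - mu m ρ i = s * (x i - mu m ρ i) := by
  simp only [lam]; ring

lemma one_sub_sum_lam_sub_one_sub_sum_mu :
    (1 - ∑ i, lam m s ρ x i) - (1 - ∑ i, mu m ρ i) = s * -∑ i, (x i - mu m ρ i) := by
  rw [sub_sub_sub_cancel_left, ← neg_sub, ← Finset.sum_sub_distrib]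
  simp only [lam_sub_mu, ← Finset.mul_sum]
  ring

end lam

/-- `∂B/∂s`, written as `∑_{i=0}^m (log λ_i(s) - log μ_i) (x_i - μ_i)` with the `i = 0` term
first: the contributions of `ρ` and of the `+ 1` in `(y log y)' = log y + 1` cancel, since
`log μ_i = ρ_i - log (1 + |e^ρ|)` and `∑_{i=0}^m (x_i - μ_i) = 0`. -/
def Bs (m : ℕ) (s : ℝ) (ρ x : Fin m → ℝ) : ℝ :=
  (log (1 - ∑ i, lam m s ρ x i) - log (1 - ∑ i, mu m ρ i)) * -∑ i, (x i - mu m ρ i)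
    + ∑ i, (log (lam m s ρ x i) - log (mu m ρ i)) * (x i - mu m ρ i)

lemma hasDerivAt_Bfun_s {m : ℕ} {s : ℝ} {ρ x : Fin m → ℝ} (hlam : ∀ i, lam m s ρ x i ≠ 0)
    (hlam₀ : 1 - ∑ i, lam m s ρ x i ≠ 0) :
    HasDerivAt (fun s => Bfun m s ρ x) (Bs m s ρ x) s := by
  have hlam' : ∀ i, HasDerivAt (fun s => lam m s ρ x i) (x i - mu m ρ i) s := fun i => by
    refine ((((hasDerivAt_id s).const_sub 1).mul_const (mu m ρ i)).add
      ((hasDerivAt_id s).mul_const (x i))).congr_deriv ?_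
    ring
  have hlam₀' : HasDerivAt (fun s => 1 - ∑ i, lam m s ρ x i) (-∑ i, (x i - mu m ρ i)) s :=
    (HasDerivAt.fun_sum (u := Finset.univ) fun i _ => hlam' i).const_sub 1
  have hB := ((((hasDerivAt_mul_log hlam₀).comp s hlam₀').add
      (HasDerivAt.fun_sum (u := Finset.univ) fun i _ =>
        (hasDerivAt_mul_log (hlam i)).comp s (hlam' i))).const_add
      (log (1 + ∑ i, exp (ρ i)))).sub
      (HasDerivAt.fun_sum (u := Finset.univ) fun i _ => (hlam' i).const_mul (ρ i))
  refine hB.congr_deriv ?_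
  simp only [Bs, log_one_sub_sum_mu, log_mu]
  simp only [add_mul, sub_mul, Finset.sum_add_distrib, Finset.sum_sub_distrib, ← Finset.mul_sum]
  ring

lemma log_sub_log_mul_sub_pos {a b : ℝ} (ha : 0 < a) (hb : 0 < b) (hab : a ≠ b) :
    0 < (log a - log b) * (a - b) := by
  rcases hab.lt_or_gt with h | h
  · exact mul_pos_of_neg_of_neg (sub_neg.2 (log_lt_log ha h)) (sub_neg.2 h)
  · exact mul_pos (sub_pos.2 (log_lt_log hb h)) (sub_pos.2 h)

lemma log_sub_log_mul_sub_nonneg {a b : ℝ} (ha : 0 < a) (hb : 0 < b) :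
    0 ≤ (log a - log b) * (a - b) := by
  rcases eq_or_ne a b with rfl | hab
  · simp
  · exact (log_sub_log_mul_sub_pos ha hb hab).le

lemma Bs_pos {m : ℕ} {s : ℝ} {ρ x : Fin m → ℝ} (hx : x ∈ simplex m) (hxμ : x ≠ mu m ρ)
    (hs : s ∈ Ioo 0 1) : 0 < Bs m s ρ x := by
  obtain ⟨j, hj⟩ := Function.ne_iff.1 hxμ
  have hlam := lam_pos (ρ := ρ) hx hs.1.le hs.2
  have hμ₀ : 0 < 1 - ∑ i, mu m ρ i := by rw [one_sub_sum_mu]; positivity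
  have hsBs : s * Bs m s ρ x = (log (1 - ∑ i, lam m s ρ x i) - log (1 - ∑ i, mu m ρ i))
        * ((1 - ∑ i, lam m s ρ x i) - (1 - ∑ i, mu m ρ i))
      + ∑ i, (log (lam m s ρ x i) - log (mu m ρ i)) * (lam m s ρ x i - mu m ρ i) := by
    simp only [Bs, one_sub_sum_lam_sub_one_sub_sum_mu, lam_sub_mu, mul_add, Finset.mul_sum]
    congr 1 <;> [ring; exact Finset.sum_congr rfl fun i _ => by ring]
  have hterm₀ := log_sub_log_mul_sub_nonneg (one_sub_sum_lam_pos (ρ := ρ) hx hs.1.le hs.2) hμ₀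
  have hterms : 0 < ∑ i, (log (lam m s ρ x i) - log (mu m ρ i)) * (lam m s ρ x i - mu m ρ i) := by
    refine Finset.sum_pos' (fun i _ => log_sub_log_mul_sub_nonneg (hlam i) (mu_pos ρ i))
      ⟨j, Finset.mem_univ j, log_sub_log_mul_sub_pos (hlam j) (mu_pos ρ j) ?_⟩
    rw [← sub_ne_zero, lam_sub_mu]
    exact mul_ne_zero hs.1.ne' (sub_ne_zero.2 hj)
  exact pos_of_mul_pos_right (hsBs ▸ add_pos_of_nonneg_of_pos hterm₀ hterms) hs.1.le

lemma hasDerivAt_Bfun_s_of_mem_simplex {m : ℕ} {s : ℝ} {ρ x : Fin m → ℝ} (hx : x ∈ simplex m)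
    (hs₀ : 0 ≤ s) (hs₁ : s < 1) : HasDerivAt (fun s => Bfun m s ρ x) (Bs m s ρ x) s :=
  hasDerivAt_Bfun_s (fun i => (lam_pos hx hs₀ hs₁ i).ne') (one_sub_sum_lam_pos hx hs₀ hs₁).ne'

lemma deriv_Bfun_s_pos {m : ℕ} {s : ℝ} {ρ x : Fin m → ℝ} (hx : x ∈ frontier (simplex m))
    (hs : s ∈ Ioo 0 1) : 0 < deriv (fun s => Bfun m s ρ x) s := by
  have hx' := mem_simplex_of_mem_frontier hx
  rw [(hasDerivAt_Bfun_s_of_mem_simplex hx' hs.1.le hs.2).deriv]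
  exact Bs_pos hx' (ne_mu_of_mem_frontier ρ hx) hs

lemma strictMonoOn_Bfun {m : ℕ} {ρ x : Fin m → ℝ} (hx : x ∈ frontier (simplex m)) :
    StrictMonoOn (fun s => Bfun m s ρ x) (Ioo 0 1) :=
  strictMonoOn_of_deriv_pos (convex_Ioo 0 1)
    (fun s hs => (hasDerivAt_Bfun_s_of_mem_simplex (mem_simplex_of_mem_frontier hx) hs.1.le
      hs.2).continuousAt.continuousWithinAt)
    (fun s hs => deriv_Bfun_s_pos hx (by rwa [interior_Ioo] at hs))

def Buncurry (m : ℕ) (w : ℝ × (Fin m → ℝ) × (Fin m → ℝ)) : ℝ :=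
  Bfun m w.1 w.2.1 w.2.2

section Buncurry

variable {m : ℕ}

lemma contDiffAt_Buncurry {n : WithTop ℕ∞} {w : ℝ × (Fin m → ℝ) × (Fin m → ℝ)}
    (hlam : ∀ i, lam m w.1 w.2.1 w.2.2 i ≠ 0) (hlam₀ : 1 - ∑ i, lam m w.1 w.2.1 w.2.2 i ≠ 0) :
    ContDiffAt ℝ n (Buncurry m) w := by
  unfold Buncurry Bfun bfun ent mu
  fun_prop (disch := first | positivity | exact hlam₀ | exact hlam _)

lemma contDiffAt_Buncurry_of_mem_simplex {n : WithTop ℕ∞} {s : ℝ} {ρ x : Fin m → ℝ}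
    (hx : x ∈ simplex m) (hs₀ : 0 ≤ s) (hs₁ : s < 1) : ContDiffAt ℝ n (Buncurry m) (s, ρ, x) :=
  contDiffAt_Buncurry (fun i => (lam_pos hx hs₀ hs₁ i).ne') (one_sub_sum_lam_pos hx hs₀ hs₁).ne'

lemma deriv_Bfun_s_eq_fderiv {s : ℝ} {ρ x : Fin m → ℝ}
    (hB : DifferentiableAt ℝ (Buncurry m) (s, ρ, x)) :
    deriv (fun s => Bfun m s ρ x) s = fderiv ℝ (Buncurry m) (s, ρ, x) (1, 0) := by
  have := hB.hasFDerivAt.comp_hasDerivAt s ((hasDerivAt_id s).prodMk (hasDerivAt_const s (ρ, x)))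
  exact this.deriv

lemma pderivR_Bfun_eq_fderiv {s : ℝ} {ρ x : Fin m → ℝ}
    (hB : DifferentiableAt ℝ (Buncurry m) (s, ρ, x)) (p : Fin m) :
    pderivR m p (fun ρ' => Bfun m s ρ' x) ρ =
      fderiv ℝ (Buncurry m) (s, ρ, x) (0, Pi.single p 1, 0) := by
  have hcurve : HasDerivAt (fun r => (s, Function.update ρ p r, x)) (0, Pi.single p 1, 0) (ρ p) :=
    (hasDerivAt_const _ s).prodMk ((hasDerivAt_update ρ p (ρ p)).prodMk (hasDerivAt_const _ x))
  have hB' : HasFDerivAt (Buncurry m) (fderiv ℝ (Buncurry m) (s, ρ, x))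
      (s, Function.update ρ p (ρ p), x) := by
    rw [Function.update_eq_self]; exact hB.hasFDerivAt
  have := hB'.comp_hasDerivAt _ hcurve
  exact this.deriv

end Buncurry

def InvertsB (m : ℕ) (h : ℝ → (Fin m → ℝ) → (Fin m → ℝ) → ℝ) : Prop :=
  ∀ w ∈ Hset m, h w.1 w.2.1 w.2.2 ∈ Ioo 0 1 ∧ Bfun m (h w.1 w.2.1 w.2.2) w.2.1 w.2.2 = w.1

namespace InvertsB

variable {m : ℕ} {h : ℝ → (Fin m → ℝ) → (Fin m → ℝ) → ℝ} {w : ℝ × (Fin m → ℝ) × (Fin m → ℝ)}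

lemma contDiffAt_Buncurry (hh : InvertsB m h) (hw : w ∈ Hset m) {n : WithTop ℕ∞} :
    ContDiffAt ℝ n (Buncurry m) (h w.1 w.2.1 w.2.2, w.2.1, w.2.2) :=
  contDiffAt_Buncurry_of_mem_simplex (mem_simplex_of_mem_frontier hw.1) (hh w hw).1.1.le
    (hh w hw).1.2

lemma continuousOn (hh : InvertsB m h) :
    ContinuousOn (fun w => h w.1 w.2.1 w.2.2) (Hset m) := by
  intro w hw
  have hB : ∀ s ∈ Ioo (0 : ℝ) 1,
      ContinuousWithinAt (fun w : ℝ × (Fin m → ℝ) × (Fin m → ℝ) => Bfun m s w.2.1 w.2.2)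
        (Hset m) w := fun s hs =>
    ((contDiffAt_Buncurry_of_mem_simplex (n := 0) (mem_simplex_of_mem_frontier hw.1) hs.1.le
      hs.2).continuousAt.comp (f := fun w : ℝ × (Fin m → ℝ) × (Fin m → ℝ) => (s, w.2.1, w.2.2))
      (by fun_prop)).continuousWithinAt
  exact continuousWithinAt_of_strictMonoOn_of_apply_eq (Ioo_mem_nhds (hh w hw).1.1 (hh w hw).1.2)
    (fun w hw => strictMonoOn_Bfun hw.1) hB continuous_fst.continuousWithinAt hh hw

lemma continuousAt_comp (hh : InvertsB m h) {γ : ℝ → ℝ × (Fin m → ℝ) × (Fin m → ℝ)} {a : ℝ}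
    (hγ : ContinuousAt γ a) (hmem : ∀ᶠ r in 𝓝 a, γ r ∈ Hset m) :
    ContinuousAt (fun r => h (γ r).1 (γ r).2.1 (γ r).2.2) a :=
  (hh.continuousOn _ hmem.self_of_nhds).tendsto.comp (tendsto_nhdsWithin_iff.2 ⟨hγ, hmem⟩)

lemma hasDerivAt_t (hh : InvertsB m h) (hw : w ∈ Hset m) :
    HasDerivAt (fun t => h t w.2.1 w.2.2)
      (1 / deriv (fun s => Bfun m s w.2.1 w.2.2) (h w.1 w.2.1 w.2.2)) w.1 := by
  have hnear : ∀ᶠ t in 𝓝 w.1, (t, w.2.1, w.2.2) ∈ Hset m := by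
    filter_upwards [Ioo_mem_nhds hw.2.1 hw.2.2] with t ht using ⟨hw.1, ht⟩
  rw [one_div]
  refine HasDerivAt.of_local_left_inverse (f := fun s => Bfun m s w.2.1 w.2.2)
    (hh.continuousAt_comp (by fun_prop) hnear) ?_
    (deriv_Bfun_s_pos hw.1 (hh w hw).1).ne' (hnear.mono fun t ht => (hh _ ht).2)
  exact (hasDerivAt_Bfun_s_of_mem_simplex (mem_simplex_of_mem_frontier hw.1) (hh w hw).1.1.le
    (hh w hw).1.2).differentiableAt.hasDerivAt

lemma hasDerivAt_update (hh : InvertsB m h) (hw : w ∈ Hset m) (p : Fin m) :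
    HasDerivAt (fun r => h w.1 (Function.update w.2.1 p r) w.2.2)
      (-(pderivR m p (fun ρ' => Bfun m (h w.1 w.2.1 w.2.2) ρ' w.2.2) w.2.1)
        / deriv (fun s => Bfun m s w.2.1 w.2.2) (h w.1 w.2.1 w.2.2)) (w.2.1 p) := by
  obtain ⟨t, ρ, x⟩ := w
  obtain ⟨hs, hBt⟩ := hh _ hw
  set s₀ := h t ρ x
  let F : ℝ × ℝ → ℝ := fun q => Bfun m q.2 (Function.update ρ p q.1) x
  have hF : ContDiffAt ℝ 1 F (ρ p, s₀) := by
    have hB : ContDiffAt ℝ 1 (Buncurry m) (s₀, Function.update ρ p (ρ p), x) := by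
      rw [Function.update_eq_self]; exact hh.contDiffAt_Buncurry hw
    have hA : ContDiff ℝ 1 fun q : ℝ × ℝ => (q.2, Function.update ρ p q.1, x) :=
      contDiff_snd.prodMk (((contDiff_update 1 ρ p).comp contDiff_fst).prodMk contDiff_const)
    exact hB.comp (ρ p, s₀) hA.contDiffAt
  have hF' := hF.hasStrictFDerivAt one_ne_zero
  have hFs : fderiv ℝ F (ρ p, s₀) (0, 1) = deriv (fun s => Bfun m s ρ x) s₀ := by
    have := hF'.hasFDerivAt.hasDerivAt_snd_slice
    simp only [F, Function.update_eq_self] at this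
    exact this.deriv.symm
  have hFρ : fderiv ℝ F (ρ p, s₀) (1, 0) = pderivR m p (fun ρ' => Bfun m s₀ ρ' x) ρ :=
    hF'.hasFDerivAt.hasDerivAt_fst_slice.deriv.symm
  have hnear : ∀ᶠ r in 𝓝 (ρ p), (t, Function.update ρ p r, x) ∈ Hset m := by
    have hb : Continuous fun r => bfun m x (Function.update ρ p r) := by
      unfold bfun; fun_prop (disch := intro; positivity)
    filter_upwards [(hb.tendsto (ρ p)).eventually_const_lt (by simpa using hw.2.2)] with r hr
    exact ⟨hw.1, hw.2.1, hr⟩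
  rw [← hFs, ← hFρ]
  refine hF'.hasDerivAt_implicit (hFs ▸ (deriv_Bfun_s_pos hw.1 hs).ne')
    (hh.continuousAt_comp (by fun_prop) hnear) (by simp [s₀]) ?_
  filter_upwards [hnear] with r hr
  simp only [F, Function.update_eq_self, (hh _ hr).2, hBt]

lemma continuousOn_fderiv_Buncurry (hh : InvertsB m h) (v : ℝ × (Fin m → ℝ) × (Fin m → ℝ)) :
    ContinuousOn (fun w => fderiv ℝ (Buncurry m) (h w.1 w.2.1 w.2.2, w.2.1, w.2.2) v)
      (Hset m) := by
  intro w hw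
  let γ : ℝ × (Fin m → ℝ) × (Fin m → ℝ) → ℝ × (Fin m → ℝ) × (Fin m → ℝ) :=
    fun w => (h w.1 w.2.1 w.2.2, w.2.1, w.2.2)
  have hγ : ContinuousWithinAt γ (Hset m) w :=
    (hh.continuousOn w hw).prodMk continuous_snd.continuousWithinAt
  have hfderiv := ((hh.contDiffAt_Buncurry hw (n := 1)).fderiv_right (m := 0) le_rfl).continuousAt
  exact (hfderiv.clm_apply continuousAt_const).comp_continuousWithinAt (f := γ) hγ

lemma continuousOn_deriv_Bfun_s (hh : InvertsB m h) :
    ContinuousOn (fun w => deriv (fun s => Bfun m s w.2.1 w.2.2) (h w.1 w.2.1 w.2.2)) (Hset m) :=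
  (hh.continuousOn_fderiv_Buncurry (1, 0)).congr fun _ hw =>
    deriv_Bfun_s_eq_fderiv ((hh.contDiffAt_Buncurry hw (n := 1)).differentiableAt one_ne_zero)

lemma continuousOn_pderivR_Bfun (hh : InvertsB m h) (p : Fin m) :
    ContinuousOn (fun w => pderivR m p (fun ρ' => Bfun m (h w.1 w.2.1 w.2.2) ρ' w.2.2) w.2.1)
      (Hset m) :=
  (hh.continuousOn_fderiv_Buncurry (0, Pi.single p 1, 0)).congr fun _ hw =>
    pderivR_Bfun_eq_fderiv ((hh.contDiffAt_Buncurry hw (n := 1)).differentiableAt one_ne_zero) p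

end InvertsB

theorem h_derivs_general (m : ℕ)
    (h : ℝ → (Fin m → ℝ) → (Fin m → ℝ) → ℝ)
    (hh : ∀ t ρ x, x ∈ frontier (simplex m) → 0 < t → t < bfun m x ρ →
      h t ρ x ∈ Set.Ioo (0 : ℝ) 1 ∧ Bfun m (h t ρ x) ρ x = t) :
    (∀ t ρ x, x ∈ frontier (simplex m) → 0 < t → t < bfun m x ρ →
      HasDerivAt (fun t' => h t' ρ x)
        (1 / deriv (fun s => Bfun m s ρ x) (h t ρ x)) t ∧
      0 < 1 / deriv (fun s => Bfun m s ρ x) (h t ρ x) ∧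
      ∀ p : Fin m,
        HasDerivAt (fun r => h t (Function.update ρ p r) x)
          (-(pderivR m p (fun ρ' => Bfun m (h t ρ x) ρ' x) ρ)
            / deriv (fun s => Bfun m s ρ x) (h t ρ x)) (ρ p)) ∧
    ContinuousOn (fun w : ℝ × (Fin m → ℝ) × (Fin m → ℝ) =>
      deriv (fun t' => h t' w.2.1 w.2.2) w.1) (Hset m) ∧
    ∀ p : Fin m,
      ContinuousOn (fun w : ℝ × (Fin m → ℝ) × (Fin m → ℝ) =>
        deriv (fun r => h w.1 (Function.update w.2.1 p r) w.2.2) (w.2.1 p)) (Hset m) := by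
  have hinv : InvertsB m h := fun w hw => hh _ _ _ hw.1 hw.2.1 hw.2.2
  have hBs_ne : ∀ w ∈ Hset m, deriv (fun s => Bfun m s w.2.1 w.2.2) (h w.1 w.2.1 w.2.2) ≠ 0 :=
    fun w hw => (deriv_Bfun_s_pos hw.1 (hinv w hw).1).ne'
  refine ⟨fun t ρ x hx ht htb => ?_, ?_, fun p => ?_⟩
  · have hw : (t, ρ, x) ∈ Hset m := ⟨hx, ht, htb⟩
    exact ⟨hinv.hasDerivAt_t hw, one_div_pos.2 (deriv_Bfun_s_pos hx (hinv _ hw).1),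
      hinv.hasDerivAt_update hw⟩
  · exact (continuousOn_const.div hinv.continuousOn_deriv_Bfun_s hBs_ne).congr
      fun _ hw => (hinv.hasDerivAt_t hw).deriv
  · exact ((hinv.continuousOn_pderivR_Bfun p).neg.div hinv.continuousOn_deriv_Bfun_s
      hBs_ne).congr fun _ hw => (hinv.hasDerivAt_update hw p).deriv

/-- h is differentiable in t and in each ρ_p on H, with
h_t = 1/B_s(h,ρ,x) > 0 and h_{ρ_p} = −B_{ρ_p}(h,ρ,x)/B_s(h,ρ,x), and these
partial derivatives are continuous on H. -/
theorem h_derivs (m : ℕ) (hm : 1 ≤ m)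
    (h : ℝ → (Fin m → ℝ) → (Fin m → ℝ) → ℝ)
    (hh : ∀ t ρ x, x ∈ frontier (simplex m) → 0 < t → t < bfun m x ρ →
      h t ρ x ∈ Set.Ioo (0 : ℝ) 1 ∧ Bfun m (h t ρ x) ρ x = t) :
    (∀ t ρ x, x ∈ frontier (simplex m) → 0 < t → t < bfun m x ρ →
      HasDerivAt (fun t' => h t' ρ x)
        (1 / deriv (fun s => Bfun m s ρ x) (h t ρ x)) t ∧
      0 < 1 / deriv (fun s => Bfun m s ρ x) (h t ρ x) ∧
      ∀ p : Fin m,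
        HasDerivAt (fun r => h t (Function.update ρ p r) x)
          (-(pderivR m p (fun ρ' => Bfun m (h t ρ x) ρ' x) ρ)
            / deriv (fun s => Bfun m s ρ x) (h t ρ x)) (ρ p)) ∧
    ContinuousOn (fun w : ℝ × (Fin m → ℝ) × (Fin m → ℝ) =>
      deriv (fun t' => h t' w.2.1 w.2.2) w.1) (Hset m) ∧
    ∀ p : Fin m,
      ContinuousOn (fun w : ℝ × (Fin m → ℝ) × (Fin m → ℝ) =>
        deriv (fun r => h w.1 (Function.update w.2.1 p r) w.2.2) (w.2.1 p)) (Hset m) :=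
  h_derivs_general m h hh
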